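/- Fix a finite independent exchange model. Let q ⊆ E, r ⊆ q, and let q' ⊆ E with q' ∩ q = ∅. Suppose ρ(e) + (1 − ρ(e))·φQ(e) ≤ φN(e) for every e ∈ q' (additional queries cannot increase an edge's overall probability of rejection or failure). Then for every structure c ∈ C, additional edge queries cannot decrease its expected final weight: G(c, s_{q,r}) ≤ Σ_{r' ⊆ q'} (∏_{e∈r'} ρ(e)) · (∏_{e∈q'\r'} (1 − ρ(e))) · G(c, s_{q∪q', r∪r'}). -/

import Mathlib

/-- A structure in an exchange is either a cycle or a chain. -/
inductive StructKind : Type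
  | cycle : StructKind
  | chain : StructKind
  deriving DecidableEq

/-- A structure: a list of edges together with a cycle/chain tag. -/
abbrev ExchangeStruct (E : Type) := List E × StructKind

/-- A finite independent exchange model: a finite edge set `E`, nonnegative edge
weights `w`, a finite set `structs` of structures (lists of distinct edges tagged as
cycles or chains), a nonempty finite collection `matchings` of feasible matchings
(subsets of `structs`), and per-edge probabilities `ρ e` (rejection if queried),
`φQ e` (post-match failure if queried and accepted), `φN e` (post-match failure if
not queried), all in `[0,1]`; all edges are independent. -/
structure ExchangeModel (E : Type) [Fintype E] [DecidableEq E] where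
  w : E → ℝ
  w_nonneg : ∀ e, 0 ≤ w e
  structs : Finset (ExchangeStruct E)
  structs_nodup : ∀ c ∈ structs, c.1.Nodup
  matchings : Finset (Finset (ExchangeStruct E))
  matchings_nonempty : matchings.Nonempty
  matchings_sub : ∀ x ∈ matchings, x ⊆ structs
  ρ : E → ℝ
  φQ : E → ℝ
  φN : E → ℝ
  ρ_mem : ∀ e, ρ e ∈ Set.Icc (0 : ℝ) 1
  φQ_mem : ∀ e, φQ e ∈ Set.Icc (0 : ℝ) 1
  φN_mem : ∀ e, φN e ∈ Set.Icc (0 : ℝ) 1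

variable {E : Type} [Fintype E] [DecidableEq E]

/-- Expected final weight of a chain with edge list `es`:
`Σ_{k} w (e_k) · Π_{j ≤ k} s (e_j)`. -/
def chainVal (w s : E → ℝ) : List E → ℝ
  | [] => 0
  | e :: es => s e * (w e + chainVal w s es)

/-- Expected final weight `G c s` of a structure `c` under per-edge success
probabilities `s`. -/
def structVal (w s : E → ℝ) (c : ExchangeStruct E) : ℝ :=
  match c.2 with
  | .cycle => (c.1.map w).sum * (c.1.map s).prod
  | .chain => chainVal w s c.1

/-- Per-edge success probabilities `s_{q,r}` for query set `q` and rejection set `r`. -/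
def succProb (M : ExchangeModel E) (q r : Finset E) : E → ℝ :=
  fun e => if e ∈ r then 0 else if e ∈ q then 1 - M.φQ e else 1 - M.φN e

/-- Probability `P_q r` of rejection set `r ⊆ q`. -/
def rejProb (M : ExchangeModel E) (q r : Finset E) : ℝ :=
  (∏ e ∈ r, M.ρ e) * ∏ e ∈ q \ r, (1 - M.ρ e)

/-- Expected final weight of a matching `x` under success probabilities `s`. -/
def matchVal (M : ExchangeModel E) (s : E → ℝ) (x : Finset (ExchangeStruct E)) : ℝ :=
  ∑ c ∈ x, structVal M.w s c

/-- The failure-aware optimal expected matching weight `max_{x ∈ M} Σ_{c ∈ x} G(c, s)`. -/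
def bestVal (M : ExchangeModel E) (s : E → ℝ) : ℝ :=
  M.matchings.sup' M.matchings_nonempty (matchVal M s)

/-- The failure-aware value `V^FA q` of a query set `q`. -/
def VFA (M : ExchangeModel E) (q : Finset E) : ℝ :=
  ∑ r ∈ q.powerset, rejProb M q r * bestVal M (succProb M q r)

/-- Nominal weight of (the edge list of) a chain under rejection set `r`: the summed
weight of all edges preceding the first rejected edge. -/
def chainNominal (w : E → ℝ) (r : Finset E) : List E → ℝ
  | [] => 0
  | e :: es => if e ∈ r then 0 else w e + chainNominal w r es

/-- Nominal weight `F c r` of a structure `c` under rejection set `r`. -/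
def nominalVal (w : E → ℝ) (r : Finset E) (c : ExchangeStruct E) : ℝ :=
  match c.2 with
  | .cycle => if ∀ e ∈ c.1, e ∉ r then (c.1.map w).sum else 0
  | .chain => chainNominal w r c.1

/-- `m` is a max-weight selection for query set `q`: to each rejection set `r ⊆ q` it
assigns a feasible matching maximizing the nominal weight `Σ_{c ∈ x} F(c, r)`. -/
def IsMaxWeightSelection (M : ExchangeModel E) (q : Finset E)
    (m : Finset E → Finset (ExchangeStruct E)) : Prop :=
  ∀ r ∈ q.powerset, m r ∈ M.matchings ∧
    ∀ x ∈ M.matchings, ∑ c ∈ x, nominalVal M.w r c ≤ ∑ c ∈ m r, nominalVal M.w r c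

/-- The max-weight value `V^MAX (q; m)` of query set `q` under max-weight selection `m`. -/
def VMAX (M : ExchangeModel E) (q : Finset E)
    (m : Finset E → Finset (ExchangeStruct E)) : ℝ :=
  ∑ r ∈ q.powerset, rejProb M q r * ∑ c ∈ m r, structVal M.w (succProb M q r) c

/-! Induct on the additional queries `q'`, one edge `a` at a time. Since the edges of a structure
are distinct, `G(c, s)` is affine in the single coordinate `s a`, so averaging over whether `a` is
rejected gives `G` at `s a = (1 - ρ a)(1 - φQ a)`; the hypothesis says this is at least the
unqueried value `1 - φN a`, and `G` is monotone in `s`. -/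

open Finset Function

section StructVal

variable {α : Type} {w s s' : α → ℝ}

lemma chainVal_nonneg (hw : ∀ e, 0 ≤ w e) (hs : ∀ e, 0 ≤ s e) :
    ∀ es : List α, 0 ≤ chainVal w s es
  | [] => le_rfl
  | e :: es => mul_nonneg (hs e) (add_nonneg (hw e) (chainVal_nonneg hw hs es))

lemma chainVal_mono (hw : ∀ e, 0 ≤ w e) (hs : ∀ e, 0 ≤ s e) (hss : ∀ e, s e ≤ s' e) :
    ∀ es : List α, chainVal w s es ≤ chainVal w s' es
  | [] => le_rfl
  | e :: es =>
    mul_le_mul (hss e) (add_le_add_right (chainVal_mono hw hs hss es) _)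
      (add_nonneg (hw e) (chainVal_nonneg hw hs es)) ((hs e).trans (hss e))

lemma structVal_mono (hw : ∀ e, 0 ≤ w e) (hs : ∀ e, 0 ≤ s e) (hss : ∀ e, s e ≤ s' e)
    (c : ExchangeStruct α) : structVal w s c ≤ structVal w s' c := by
  obtain ⟨es, _ | _⟩ := c
  · exact mul_le_mul_of_nonneg_left
      (List.prod_map_le_prod_map₀ s s' (fun e _ => hs e) fun e _ => hss e)
      (List.sum_nonneg (by simpa using fun e _ => hw e))
  · exact chainVal_mono hw hs hss es

lemma chainVal_congr :
    ∀ {es : List α}, (∀ e ∈ es, s e = s' e) → chainVal w s es = chainVal w s' es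
  | [], _ => rfl
  | e :: es, h => by
    rw [chainVal, chainVal, h e List.mem_cons_self,
      chainVal_congr fun x hx => h x (List.mem_cons_of_mem _ hx)]

variable [DecidableEq α]

lemma chainVal_update_affine (a : α) :
    ∀ {es : List α}, es.Nodup → ∃ A B : ℝ, ∀ t, chainVal w (update s a t) es = A + B * t
  | [], _ => ⟨0, 0, fun _ => by simp [chainVal]⟩
  | e :: es, hnd => by
    obtain ⟨he, hnd⟩ := List.nodup_cons.mp hnd
    by_cases hea : e = a
    · subst hea
      refine ⟨0, w e + chainVal w s es, fun t => ?_⟩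
      rw [chainVal, update_self,
        chainVal_congr fun x hx => update_of_ne (ne_of_mem_of_not_mem hx he) _ _]
      ring
    · obtain ⟨A, B, hAB⟩ := chainVal_update_affine a hnd
      exact ⟨s e * (w e + A), s e * B, fun t => by rw [chainVal, update_of_ne hea, hAB]; ring⟩

lemma List.prod_map_update_affine (a : α) {es : List α} (hnd : es.Nodup) :
    ∃ A B : ℝ, ∀ t, (es.map (update s a t)).prod = A + B * t := by
  simp_rw [← List.prod_toFinset _ hnd]
  by_cases ha : a ∈ es.toFinset
  · exact ⟨0, ∏ e ∈ es.toFinset \ {a}, s e, fun t => by rw [prod_update_of_mem ha]; ring⟩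
  · exact ⟨∏ e ∈ es.toFinset, s e, 0, fun t => by rw [prod_update_of_notMem ha]; ring⟩

lemma structVal_update_affine (a : α) {c : ExchangeStruct α} (hnd : c.1.Nodup) :
    ∃ A B : ℝ, ∀ t, structVal w (update s a t) c = A + B * t := by
  obtain ⟨es, _ | _⟩ := c
  · obtain ⟨A, B, hAB⟩ := List.prod_map_update_affine (s := s) a hnd
    exact ⟨(es.map w).sum * A, (es.map w).sum * B, fun t => by
      simp only [structVal, hAB]; ring⟩
  · exact chainVal_update_affine a hnd

lemma structVal_update_convexComb (a : α) {c : ExchangeStruct α} (hnd : c.1.Nodup)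
    (p t₁ t₂ : ℝ) :
    structVal w (update s a ((1 - p) * t₁ + p * t₂)) c
      = (1 - p) * structVal w (update s a t₁) c + p * structVal w (update s a t₂) c := by
  obtain ⟨A, B, hAB⟩ := structVal_update_affine (w := w) (s := s) a hnd
  rw [hAB, hAB, hAB]
  ring

lemma structVal_le_convexComb_update (hw : ∀ e, 0 ≤ w e) (hs : ∀ e, 0 ≤ s e)
    {c : ExchangeStruct α} (hnd : c.1.Nodup) {a : α} {p t : ℝ} (hsa : s a ≤ (1 - p) * t) :
    structVal w s c ≤ (1 - p) * structVal w (update s a t) c + p * structVal w (update s a 0) c :=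
  calc structVal w s c
      ≤ structVal w (update s a ((1 - p) * t + p * 0)) c := by
        refine structVal_mono hw hs (fun e => ?_) c
        rcases eq_or_ne e a with rfl | hea
        · simpa using hsa
        · rw [update_of_ne hea]
    _ = _ := structVal_update_convexComb a hnd p t 0

end StructVal

section ExchangeModel

variable (M : ExchangeModel E)

lemma succProb_nonneg (q r : Finset E) (e : E) : 0 ≤ succProb M q r e := by
  unfold succProb
  split_ifs <;> linarith [(M.φQ_mem e).2, (M.φN_mem e).2]

lemma succProb_of_notMem {q r : Finset E} {a : E} (hq : a ∉ q) (hr : a ∉ r) :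
    succProb M q r a = 1 - M.φN a := by
  simp [succProb, hq, hr]

lemma succProb_insert_rejected (q r : Finset E) (a : E) :
    succProb M q (insert a r) = update (succProb M q r) a 0 := by
  ext e
  rcases eq_or_ne e a with rfl | hea <;> simp [succProb, *]

lemma succProb_insert_queried (q : Finset E) {r : Finset E} {a : E} (hr : a ∉ r) :
    succProb M (insert a q) r = update (succProb M q r) a (1 - M.φQ a) := by
  ext e
  rcases eq_or_ne e a with rfl | hea <;> simp [succProb, *]

lemma rejProb_nonneg (q r : Finset E) : 0 ≤ rejProb M q r :=
  mul_nonneg (prod_nonneg fun e _ => (M.ρ_mem e).1)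
    (prod_nonneg fun e _ => sub_nonneg.mpr (M.ρ_mem e).2)

lemma rejProb_insert_accepted {q r : Finset E} {a : E} (ha : a ∉ q) (hr : r ⊆ q) :
    rejProb M (insert a q) r = (1 - M.ρ a) * rejProb M q r := by
  rw [rejProb, rejProb, insert_sdiff_of_notMem _ (fun h => ha (hr h)),
    prod_insert (fun h => ha (mem_sdiff.mp h).1)]
  ring

lemma rejProb_insert_rejected {q r : Finset E} {a : E} (ha : a ∉ q) (hr : r ⊆ q) :
    rejProb M (insert a q) (insert a r) = M.ρ a * rejProb M q r := by
  rw [rejProb, rejProb, insert_sdiff_insert, sdiff_insert_of_notMem ha,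
    prod_insert (fun h => ha (hr h))]
  ring

lemma structVal_le_expected_structVal_insert_query {q r : Finset E} {a : E}
    (hq : a ∉ q) (hr : a ∉ r) (ha : M.ρ a + (1 - M.ρ a) * M.φQ a ≤ M.φN a)
    {c : ExchangeStruct E} (hnd : c.1.Nodup) :
    structVal M.w (succProb M q r) c
      ≤ (1 - M.ρ a) * structVal M.w (succProb M (insert a q) r) c
        + M.ρ a * structVal M.w (succProb M (insert a q) (insert a r)) c := by
  rw [succProb_insert_rejected, succProb_insert_queried M q hr, update_idem]
  refine structVal_le_convexComb_update M.w_nonneg (succProb_nonneg M q r) hnd ?_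
  rw [succProb_of_notMem M hq hr]
  linarith

theorem structVal_le_sum_rejProb_mul_structVal {q r q' : Finset E}
    (hq : Disjoint q' q) (hr : Disjoint q' r)
    (h : ∀ e ∈ q', M.ρ e + (1 - M.ρ e) * M.φQ e ≤ M.φN e)
    {c : ExchangeStruct E} (hnd : c.1.Nodup) :
    structVal M.w (succProb M q r) c
      ≤ ∑ r' ∈ q'.powerset, rejProb M q' r' * structVal M.w (succProb M (q ∪ q') (r ∪ r')) c := by
  induction q' using Finset.induction_on with
  | empty => simp [rejProb]
  | insert a q' ha ih =>
    rw [sum_powerset_insert ha, ← sum_add_distrib]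
    refine (ih (hq.mono_left (subset_insert a q')) (hr.mono_left (subset_insert a q'))
      fun e he => h e (mem_insert_of_mem he)).trans (sum_le_sum fun r' hr' => ?_)
    have hr'q' : r' ⊆ q' := mem_powerset.mp hr'
    have haq : a ∉ q ∪ q' := notMem_union.mpr ⟨disjoint_left.mp hq (mem_insert_self a q'), ha⟩
    have har : a ∉ r ∪ r' :=
      notMem_union.mpr ⟨disjoint_left.mp hr (mem_insert_self a q'), fun h => ha (hr'q' h)⟩
    rw [rejProb_insert_accepted M ha hr'q', rejProb_insert_rejected M ha hr'q',
      union_insert, union_insert]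
    calc rejProb M q' r' * structVal M.w (succProb M (q ∪ q') (r ∪ r')) c
        ≤ rejProb M q' r' *
            ((1 - M.ρ a) * structVal M.w (succProb M (insert a (q ∪ q')) (r ∪ r')) c
              + M.ρ a * structVal M.w (succProb M (insert a (q ∪ q')) (insert a (r ∪ r'))) c) :=
          mul_le_mul_of_nonneg_left
            (structVal_le_expected_structVal_insert_query M haq har
              (h a (mem_insert_self a q')) hnd)
            (rejProb_nonneg M q' r')
      _ = _ := by ring

end ExchangeModel

theorem structVal_le_expected_structVal_of_more_queries
    (M : ExchangeModel E) (q r q' : Finset E)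
    (hr : r ⊆ q) (hdisj : Disjoint q' q)
    (h : ∀ e ∈ q', M.ρ e + (1 - M.ρ e) * M.φQ e ≤ M.φN e)
    (c : ExchangeStruct E) (hc : c ∈ M.structs) :
    structVal M.w (succProb M q r) c
      ≤ ∑ r' ∈ q'.powerset,
          (∏ e ∈ r', M.ρ e) * (∏ e ∈ q' \ r', (1 - M.ρ e)) *
            structVal M.w (succProb M (q ∪ q') (r ∪ r')) c :=
  structVal_le_sum_rejProb_mul_structVal M hdisj (hdisj.mono_right hr) h (M.structs_nodup c hc)
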